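/- arXiv:1402.6115 — 7 statements merged into one kernel-verified Lean document; each statement's English description precedes it below -/
import Mathlib

section
/- Any element of a group G = ⟨X⟩ which is conjugate to a product of n palindromes (n ≥ 1) is itself a product of n palindromes if n is even, and a product of n+1 palindromes if n is odd. -/
/-!
Write the conjugator as a word `h = w.prod` over `X^{±1}` and put `h' = w.reverse.prod`. For a
palindrome `p`, both `h' * p * h` and `h⁻¹ * p * h'⁻¹` are palindromes (the second is the inverse
of `h' * p⁻¹ * h`). Hence
`h⁻¹ * p₁ * p₂ * h = (h⁻¹ * p₁ * h'⁻¹) * (h' * p₂ * h)`,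
so conjugating by `h` preserves products of an even number of palindromes. For an odd number,
split off the first palindrome and insert the extra palindrome `h' * h`:
`h⁻¹ * p₁ * g * h = (h⁻¹ * p₁ * h'⁻¹) * (h' * h) * (h⁻¹ * g * h)`.
-/

/-- An element `g` of a group `G` is a palindrome with respect to a generating set `X`
if it is represented by a word in the alphabet `X^{±1}` that equals its own reversal. -/
def IsPalindrome {G : Type*} [Group G] (X : Set G) (g : G) : Prop :=
  ∃ w : List G, (∀ x ∈ w, x ∈ X ∨ x⁻¹ ∈ X) ∧ w.reverse = w ∧ w.prod = g

/-- `g` is a product of `k` palindromes with respect to `X`. -/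
def IsProdOfPalindromes {G : Type*} [Group G] (X : Set G) (k : ℕ) (g : G) : Prop :=
  ∃ l : List G, l.length = k ∧ (∀ p ∈ l, IsPalindrome X p) ∧ l.prod = g

section

variable {G : Type*} [Group G] {X : Set G}

theorem exists_word_of_mem_closure {h : G} (hh : h ∈ Subgroup.closure X) :
    ∃ w : List G, (∀ x ∈ w, x ∈ X ∨ x⁻¹ ∈ X) ∧ w.prod = h := by
  rw [← SetLike.mem_coe, ← Subgroup.coe_toSubmonoid, Subgroup.closure_toSubmonoid] at hh
  exact Submonoid.exists_list_of_mem_closure hh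

namespace IsPalindrome

theorem one (X : Set G) : IsPalindrome X 1 :=
  ⟨[], by simp, rfl, rfl⟩

theorem inv {p : G} (hp : IsPalindrome X p) : IsPalindrome X p⁻¹ := by
  obtain ⟨u, hu, hu_rev, rfl⟩ := hp
  refine ⟨(u.map (·⁻¹)).reverse, ?_, ?_, (List.prod_inv_reverse u).symm⟩
  · simp only [List.mem_reverse, List.mem_map]
    rintro _ ⟨y, hy, rfl⟩
    simpa [or_comm] using hu y hy
  · rw [List.reverse_reverse, ← List.map_reverse, hu_rev]

variable {w : List G}

theorem reverse_prod_mul_mul_prod {p : G} (hp : IsPalindrome X p)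
    (hw : ∀ x ∈ w, x ∈ X ∨ x⁻¹ ∈ X) :
    IsPalindrome X (w.reverse.prod * p * w.prod) := by
  obtain ⟨u, hu, hu_rev, rfl⟩ := hp
  refine ⟨w.reverse ++ u ++ w, ?_, by simp [hu_rev], by simp [mul_assoc]⟩
  simp only [List.mem_append, List.mem_reverse]
  rintro x ((hx | hx) | hx)
  exacts [hw x hx, hu x hx, hw x hx]

theorem prod_inv_mul_mul_reverse_prod_inv {p : G} (hp : IsPalindrome X p)
    (hw : ∀ x ∈ w, x ∈ X ∨ x⁻¹ ∈ X) :
    IsPalindrome X (w.prod⁻¹ * p * w.reverse.prod⁻¹) := by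
  simpa [mul_assoc] using (hp.inv.reverse_prod_mul_mul_prod hw).inv

end IsPalindrome

namespace IsProdOfPalindromes

theorem mul {m n : ℕ} {g g' : G} (hg : IsProdOfPalindromes X m g)
    (hg' : IsProdOfPalindromes X n g') : IsProdOfPalindromes X (m + n) (g * g') := by
  obtain ⟨l, rfl, hl, rfl⟩ := hg
  obtain ⟨l', rfl, hl', rfl⟩ := hg'
  refine ⟨l ++ l', List.length_append, ?_, List.prod_append⟩
  simpa only [List.mem_append] using fun p hp => hp.elim (hl p) (hl' p)

theorem of_isPalindrome {p : G} (hp : IsPalindrome X p) : IsProdOfPalindromes X 1 p :=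
  ⟨[p], rfl, by simpa using hp, List.prod_singleton⟩

theorem exists_mul_of_succ {n : ℕ} {g : G} (hg : IsProdOfPalindromes X (n + 1) g) :
    ∃ p g', IsPalindrome X p ∧ IsProdOfPalindromes X n g' ∧ g = p * g' := by
  obtain ⟨_ | ⟨p, l⟩, hlen, hl, rfl⟩ := hg
  · simp at hlen
  · exact ⟨p, l.prod, hl p (by simp), ⟨l, by simpa using hlen, fun q hq => hl q (by simp [hq]),
      rfl⟩, List.prod_cons⟩

theorem conj_of_even {w : List G} (hw : ∀ x ∈ w, x ∈ X ∨ x⁻¹ ∈ X) {m : ℕ} {g : G}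
    (hg : IsProdOfPalindromes X (2 * m) g) :
    IsProdOfPalindromes X (2 * m) (w.prod⁻¹ * g * w.prod) := by
  induction m generalizing g with
  | zero =>
    obtain ⟨l, hlen, -, rfl⟩ := hg
    obtain rfl : l = [] := List.length_eq_zero_iff.mp hlen
    rw [List.prod_nil, mul_one, inv_mul_cancel]
    exact ⟨[], rfl, by simp, rfl⟩
  | succ m ih =>
    obtain ⟨p₁, g₁, hp₁, hg₁, rfl⟩ := exists_mul_of_succ hg
    obtain ⟨p₂, g₂, hp₂, hg₂, rfl⟩ := exists_mul_of_succ hg₁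
    have key : w.prod⁻¹ * (p₁ * (p₂ * g₂)) * w.prod =
        (w.prod⁻¹ * p₁ * w.reverse.prod⁻¹) * (w.reverse.prod * p₂ * w.prod) *
          (w.prod⁻¹ * g₂ * w.prod) := by group
    rw [key, show 2 * (m + 1) = 1 + 1 + 2 * m by ring]
    exact ((of_isPalindrome (hp₁.prod_inv_mul_mul_reverse_prod_inv hw)).mul
      (of_isPalindrome (hp₂.reverse_prod_mul_mul_prod hw))).mul (ih hg₂)

theorem conj_of_odd {w : List G} (hw : ∀ x ∈ w, x ∈ X ∨ x⁻¹ ∈ X) {m : ℕ} {g : G}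
    (hg : IsProdOfPalindromes X (2 * m + 1) g) :
    IsProdOfPalindromes X (2 * m + 1 + 1) (w.prod⁻¹ * g * w.prod) := by
  obtain ⟨p, g', hp, hg', rfl⟩ := exists_mul_of_succ hg
  have key : w.prod⁻¹ * (p * g') * w.prod =
      (w.prod⁻¹ * p * w.reverse.prod⁻¹) * (w.reverse.prod * 1 * w.prod) *
        (w.prod⁻¹ * g' * w.prod) := by group
  rw [key, show 2 * m + 1 + 1 = 1 + 1 + 2 * m by ring]
  exact ((of_isPalindrome (hp.prod_inv_mul_mul_reverse_prod_inv hw)).mul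
    (of_isPalindrome ((IsPalindrome.one X).reverse_prod_mul_mul_prod hw))).mul (conj_of_even hw hg')

end IsProdOfPalindromes

end

theorem conj_prod_palindromes_general {G : Type*} [Group G] (X : Set G)
    (hX : Subgroup.closure X = ⊤) (n : ℕ) (g h : G)
    (hg : IsProdOfPalindromes X n g) :
    (Even n → IsProdOfPalindromes X n (h⁻¹ * g * h)) ∧
    (Odd n → IsProdOfPalindromes X (n + 1) (h⁻¹ * g * h)) := by
  obtain ⟨w, hw, rfl⟩ := exists_word_of_mem_closure (hX ▸ Subgroup.mem_top h)
  constructor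
  · rintro ⟨m, rfl⟩
    rw [← two_mul] at hg ⊢
    exact IsProdOfPalindromes.conj_of_even hw hg
  · rintro ⟨m, rfl⟩
    exact IsProdOfPalindromes.conj_of_odd hw hg

theorem conj_prod_palindromes {G : Type*} [Group G] (X : Set G)
    (hX : Subgroup.closure X = ⊤) (n : ℕ) (hn : 1 ≤ n) (g h : G)
    (hg : IsProdOfPalindromes X n g) :
    (Even n → IsProdOfPalindromes X n (h⁻¹ * g * h)) ∧
    (Odd n → IsProdOfPalindromes X (n + 1) (h⁻¹ * g * h)) :=
  conj_prod_palindromes_general X hX n g h hg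
end

section
/- In a group G = ⟨X⟩, any commutator [u, pq] with p and q palindromes is a product of at most 4 palindromes. -/
open scoped commutatorElement

section Palindromes

variable {G : Type*} [Group G] {X : Set G}

theorem forall_mem_map_inv_union_inv {w : List G} (hw : ∀ x ∈ w, x ∈ X ∪ X⁻¹) :
    ∀ x ∈ w.map (·⁻¹), x ∈ X ∪ X⁻¹ := by
  simp only [List.mem_map, forall_exists_index, and_imp, forall_apply_eq_imp_iff₂]
  intro x hx
  simpa [Set.mem_union, Set.mem_inv, or_comm] using hw x hx

theorem IsPalindrome.inv_s4 {g : G} (hg : IsPalindrome X g) : IsPalindrome X g⁻¹ := by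
  obtain ⟨w, hwX, hw, rfl⟩ := hg
  have hw' : (w.map (·⁻¹)).reverse = w.map (·⁻¹) := by rw [← List.map_reverse, hw]
  exact ⟨w.map (·⁻¹), forall_mem_map_inv_union_inv hwX, hw', by
    rw [List.prod_inv_reverse, hw']⟩

theorem IsPalindrome.prod_mul_mul_reverse_prod {w : List G} (hw : ∀ x ∈ w, x ∈ X ∪ X⁻¹)
    {p : G} (hp : IsPalindrome X p) : IsPalindrome X (w.prod * p * w.reverse.prod) := by
  obtain ⟨pw, hpX, hpw, rfl⟩ := hp
  refine ⟨w ++ pw ++ w.reverse, ?_, by simp [hpw], by simp [List.prod_append, mul_assoc]⟩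
  simp only [List.mem_append, List.mem_reverse]
  rintro x ((hx | hx) | hx)
  exacts [hw x hx, hpX x hx, hw x hx]

theorem exists_word_of_closure_eq_top (hX : Subgroup.closure X = ⊤) (g : G) :
    ∃ w : List G, (∀ x ∈ w, x ∈ X ∪ X⁻¹) ∧ w.prod = g :=
  Submonoid.exists_list_of_mem_closure <| by
    rw [← Subgroup.closure_toSubmonoid, hX]; trivial

end Palindromes

theorem commutator_two_palindromes_four {G : Type*} [Group G] (X : Set G)
    (hX : Subgroup.closure X = ⊤) (u p q : G)
    (hp : IsPalindrome X p) (hq : IsPalindrome X q) :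
    ∃ k ≤ 4, IsProdOfPalindromes X k ⁅u, p * q⁆ := by
  obtain ⟨w, hwX, rfl⟩ := exists_word_of_closure_eq_top hX u
  have hup := hp.prod_mul_mul_reverse_prod hwX
  have huq : IsPalindrome X (w.reverse.prod⁻¹ * q * w.prod⁻¹) := by
    rw [List.prod_reverse_noncomm, inv_inv, List.prod_inv_reverse]
    exact hq.prod_mul_mul_reverse_prod (forall_mem_map_inv_union_inv hwX)
  refine ⟨4, le_rfl,
    [w.prod * p * w.reverse.prod, w.reverse.prod⁻¹ * q * w.prod⁻¹, q⁻¹, p⁻¹], rfl, ?_, ?_⟩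
  · simp only [List.mem_cons, List.not_mem_nil, or_false]
    rintro r (rfl | rfl | rfl | rfl)
    exacts [hup, huq, hq.inv_s4, hp.inv_s4]
  · simp only [List.prod_cons, List.prod_nil, commutatorElement_def]
    group
end

section
/- If q = p1·p2 is a product of two palindromes in a group G = ⟨X⟩, then for every integer m, the element q^m is also a product of two palindromes. -/
section Palindromes

variable {G : Type*} [Group G] {X : Set G} {a b p₁ p₂ : G}

theorem isPalindrome_one : IsPalindrome X 1 :=
  ⟨[], by simp, rfl, rfl⟩

theorem IsPalindrome.inv_s5 (ha : IsPalindrome X a) : IsPalindrome X a⁻¹ := by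
  obtain ⟨w, hwX, hrev, rfl⟩ := ha
  refine ⟨w.map (·⁻¹), ?_, by rw [← List.map_reverse, hrev], ?_⟩
  · simp only [List.mem_map]
    rintro _ ⟨x, hx, rfl⟩
    simpa [or_comm] using hwX x hx
  · rw [← inv_inv (w.map _).prod, ← List.prod_reverse_noncomm, hrev]

theorem IsPalindrome.mul_mul_self (ha : IsPalindrome X a) (hb : IsPalindrome X b) :
    IsPalindrome X (a * b * a) := by
  obtain ⟨u, huX, hu, rfl⟩ := ha
  obtain ⟨v, hvX, hv, rfl⟩ := hb
  refine ⟨u ++ v ++ u, ?_, by simp [hu, hv], by simp [mul_assoc]⟩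
  simp only [List.mem_append]
  rintro x ((hx | hx) | hx)
  exacts [huX x hx, hvX x hx, huX x hx]

theorem IsPalindrome.mul_mul_pow (hp₁ : IsPalindrome X p₁) (hp₂ : IsPalindrome X p₂) (n : ℕ) :
    IsPalindrome X (p₁ * (p₂ * p₁) ^ n) := by
  induction n generalizing p₁ p₂ with
  | zero => simpa using hp₁
  | succ n ih =>
    have hsandwich : p₁ * (p₂ * p₁) ^ (n + 1) = p₁ * (p₂ * (p₁ * p₂) ^ n) * p₁ := by
      rw [pow_succ, ← mul_pow_mul]
      simp only [mul_assoc]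
    rw [hsandwich]
    exact hp₁.mul_mul_self (ih hp₂ hp₁)

theorem IsPalindrome.isProdOfPalindromes_two_mul (ha : IsPalindrome X a)
    (hb : IsPalindrome X b) : IsProdOfPalindromes X 2 (a * b) :=
  ⟨[a, b], rfl, by simp [ha, hb], by simp⟩

theorem IsPalindrome.isProdOfPalindromes_two_mul_pow (hp₁ : IsPalindrome X p₁)
    (hp₂ : IsPalindrome X p₂) (n : ℕ) : IsProdOfPalindromes X 2 ((p₁ * p₂) ^ n) := by
  cases n with
  | zero => simpa using (isPalindrome_one (X := X)).isProdOfPalindromes_two_mul isPalindrome_one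
  | succ n =>
    have hsplit : (p₁ * p₂) ^ (n + 1) = p₁ * (p₂ * p₁) ^ n * p₂ := by
      rw [pow_succ, ← mul_assoc, mul_pow_mul]
    rw [hsplit]
    exact (hp₁.mul_mul_pow hp₂ n).isProdOfPalindromes_two_mul hp₂

end Palindromes

theorem zpow_of_prod_two_palindromes_general {G : Type*} [Group G] (X : Set G)
    (p₁ p₂ : G)
    (hp₁ : IsPalindrome X p₁) (hp₂ : IsPalindrome X p₂) (m : ℤ) :
    IsProdOfPalindromes X 2 ((p₁ * p₂) ^ m) := by
  obtain ⟨n, rfl | rfl⟩ := Int.eq_nat_or_neg m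
  · rw [zpow_natCast]
    exact hp₁.isProdOfPalindromes_two_mul_pow hp₂ n
  · rw [zpow_neg, zpow_natCast, ← inv_pow, mul_inv_rev]
    exact hp₂.inv_s5.isProdOfPalindromes_two_mul_pow hp₁.inv_s5 n

theorem zpow_of_prod_two_palindromes {G : Type*} [Group G] (X : Set G)
    (hX : Subgroup.closure X = ⊤) (p₁ p₂ : G)
    (hp₁ : IsPalindrome X p₁) (hp₂ : IsPalindrome X p₂) (m : ℤ) :
    IsProdOfPalindromes X 2 ((p₁ * p₂) ^ m) :=
  zpow_of_prod_two_palindromes_general X p₁ p₂ hp₁ hp₂ m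
end

section
/- Let G = ⟨X⟩ be a group, H a normal subgroup of G, and Ḡ = G/H generated by the image X̄ of X. Then pw(Ḡ, X̄) ≤ pw(G, X) ≤ pw(Ḡ, X̄) + pw(H, X), where pw(H, X) denotes the supremum over h ∈ H of the minimal number of palindromes in X^{±1} whose product is h. -/
/-- The palindromic length of `g` with respect to `X`, as an extended natural number. -/
noncomputable def palLength {G : Type*} [Group G] (X : Set G) (g : G) : ℕ∞ :=
  sInf ((fun k : ℕ => (k : ℕ∞)) '' {k : ℕ | IsProdOfPalindromes X k g})

/-- The palindromic width of `G` with respect to `X`. -/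
noncomputable def palWidth (G : Type*) [Group G] (X : Set G) : ℕ∞ :=
  ⨆ g : G, palLength X g

/-- The palindromic width of a subgroup `H` of `G` with respect to palindromes of `G` in `X`. -/
noncomputable def palWidthOn {G : Type*} [Group G] (H : Subgroup G) (X : Set G) : ℕ∞ :=
  ⨆ h : H, palLength X (h : G)

/-!
Palindromes map to palindromes under a homomorphism, which gives the lower bound. Conversely,
lifting the letters of a palindromic word of `G ⧸ H` through one fixed section of the quotient
map keeps the word palindromic, so a factorisation of `g H` into `k` palindromes lifts to some
`g'` with `g'⁻¹ g ∈ H`, and `g = g' · (g'⁻¹ g)` is a product of `k + pw(H, X)` palindromes.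
-/

open Function

theorem List.map_map_invFunOn {α β : Type*} [Nonempty α] {f : α → β} {s : Set α}
    {l : List β} (h : ∀ y ∈ l, ∃ x ∈ s, f x = y) : (l.map (invFunOn f s)).map f = l := by
  rw [List.map_map]
  exact (List.map_congr_left fun y hy => invFunOn_eq (h y hy)).trans (List.map_id l)

theorem List.forall_mem_map_invFunOn {α β : Type*} [Nonempty α] {f : α → β} {s : Set α}
    {l : List β} (h : ∀ y ∈ l, ∃ x ∈ s, f x = y) : ∀ x ∈ l.map (invFunOn f s), x ∈ s := by
  simp only [List.mem_map]
  rintro _ ⟨y, hy, rfl⟩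
  exact invFunOn_mem (h y hy)

section Palindromes

variable {G K : Type*} [Group G] [Group K] {X : Set G}

theorem IsProdOfPalindromes.mul_s8 {k m : ℕ} {a b : G} (ha : IsProdOfPalindromes X k a)
    (hb : IsProdOfPalindromes X m b) : IsProdOfPalindromes X (k + m) (a * b) := by
  obtain ⟨l, rfl, hl, rfl⟩ := ha
  obtain ⟨l', rfl, hl', rfl⟩ := hb
  refine ⟨l ++ l', List.length_append, ?_, List.prod_append⟩
  simpa only [List.mem_append, or_imp, forall_and] using ⟨hl, hl'⟩

theorem IsPalindrome.map (f : G →* K) {p : G} (hp : IsPalindrome X p) :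
    IsPalindrome (f '' X) (f p) := by
  obtain ⟨w, hw, hrev, rfl⟩ := hp
  refine ⟨w.map f, ?_, by rw [← List.map_reverse, hrev], (map_list_prod f w).symm⟩
  simp only [List.mem_map]
  rintro _ ⟨x, hx, rfl⟩
  rcases hw x hx with hx | hx
  · exact Or.inl ⟨x, hx, rfl⟩
  · exact Or.inr ⟨x⁻¹, hx, map_inv f x⟩

theorem IsProdOfPalindromes.map (f : G →* K) {k : ℕ} {g : G}
    (hg : IsProdOfPalindromes X k g) : IsProdOfPalindromes (f '' X) k (f g) := by
  obtain ⟨l, rfl, hl, rfl⟩ := hg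
  refine ⟨l.map f, List.length_map f, ?_, (map_list_prod f l).symm⟩
  simp only [List.mem_map]
  rintro _ ⟨p, hp, rfl⟩
  exact (hl p hp).map f

/-- The letters are lifted through one fixed function, so the lifted word is again a palindrome. -/
theorem IsPalindrome.exists_lift (f : G →* K) {p : K} (hp : IsPalindrome (f '' X) p) :
    ∃ q, IsPalindrome X q ∧ f q = p := by
  obtain ⟨w, hw, hrev, rfl⟩ := hp
  have hlift : ∀ y ∈ w, ∃ z ∈ {z | z ∈ X ∨ z⁻¹ ∈ X}, f z = y := by
    intro y hy
    rcases hw y hy with ⟨x, hx, rfl⟩ | ⟨x, hx, hxy⟩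
    · exact ⟨x, Or.inl hx, rfl⟩
    · exact ⟨x⁻¹, Or.inr (by rwa [inv_inv]), by rw [map_inv, hxy, inv_inv]⟩
  refine ⟨_, ⟨w.map (invFunOn f {z | z ∈ X ∨ z⁻¹ ∈ X}), List.forall_mem_map_invFunOn hlift,
    by rw [← List.map_reverse, hrev], rfl⟩, ?_⟩
  rw [map_list_prod, List.map_map_invFunOn hlift]

theorem IsProdOfPalindromes.exists_lift (f : G →* K) {k : ℕ} {g : K}
    (hg : IsProdOfPalindromes (f '' X) k g) : ∃ g', IsProdOfPalindromes X k g' ∧ f g' = g := by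
  obtain ⟨l, rfl, hl, rfl⟩ := hg
  have hlift : ∀ p ∈ l, ∃ q ∈ {q | IsPalindrome X q}, f q = p :=
    fun p hp => (hl p hp).exists_lift f
  refine ⟨_, ⟨l.map (invFunOn f {q | IsPalindrome X q}), List.length_map _,
    List.forall_mem_map_invFunOn hlift, rfl⟩, ?_⟩
  rw [map_list_prod, List.map_map_invFunOn hlift]

theorem palLength_le {k : ℕ} {g : G} (hg : IsProdOfPalindromes X k g) : palLength X g ≤ k :=
  sInf_le ⟨k, hg, rfl⟩

theorem le_palLength_of_forall {c : ℕ∞} {g : G} (h : ∀ k, IsProdOfPalindromes X k g → c ≤ k) :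
    c ≤ palLength X g :=
  le_sInf <| by
    rintro _ ⟨k, hk, rfl⟩
    exact h k hk

theorem palLength_le_palLength_add_of_forall {Y : Set K} {g : G} {y : K} {c : ℕ∞}
    (h : ∀ k, IsProdOfPalindromes Y k y → palLength X g ≤ k + c) :
    palLength X g ≤ palLength Y y + c := by
  change _ ≤ sInf _ + c
  rw [ENat.sInf_add]
  refine le_iInf₂ ?_
  rintro _ ⟨k, hk, rfl⟩
  exact h k hk

theorem palLength_mul_le (a b : G) : palLength X (a * b) ≤ palLength X a + palLength X b :=
  palLength_le_palLength_add_of_forall fun k hk => by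
    rw [add_comm]
    exact palLength_le_palLength_add_of_forall fun m hm => by
      rw [add_comm]
      exact_mod_cast palLength_le (hk.mul_s8 hm)

theorem palLength_map_le (f : G →* K) (g : G) : palLength (f '' X) (f g) ≤ palLength X g :=
  le_palLength_of_forall fun _ hk => palLength_le (hk.map f)

theorem palLength_le_palLength_map_add (f : G →* K) (g : G) :
    palLength X g ≤ palLength (f '' X) (f g) + palWidthOn f.ker X :=
  palLength_le_palLength_add_of_forall fun k hk => by
    obtain ⟨g', hg', hfg'⟩ := hk.exists_lift f
    have hker : g'⁻¹ * g ∈ f.ker := by simp [hfg']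
    calc palLength X g = palLength X (g' * (g'⁻¹ * g)) := by rw [mul_inv_cancel_left]
      _ ≤ palLength X g' + palLength X (g'⁻¹ * g) := palLength_mul_le _ _
      _ ≤ k + palWidthOn f.ker X :=
        add_le_add (palLength_le hg') (le_iSup (fun h : f.ker => palLength X h) ⟨_, hker⟩)

theorem palWidth_map_le {f : G →* K} (hf : Surjective f) :
    palWidth K (f '' X) ≤ palWidth G X :=
  iSup_le fun y => by
    obtain ⟨g, rfl⟩ := hf y
    exact (palLength_map_le f g).trans (le_iSup (palLength X) g)

theorem palWidth_le_palWidth_map_add (f : G →* K) :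
    palWidth G X ≤ palWidth K (f '' X) + palWidthOn f.ker X :=
  iSup_le fun g => (palLength_le_palLength_map_add f g).trans <|
    add_le_add_left (le_iSup (palLength (f '' X)) (f g)) _

end Palindromes

theorem palWidth_quotient_bounds_general {G : Type*} [Group G] (X : Set G)
    (H : Subgroup G) [H.Normal] :
    palWidth (G ⧸ H) ((QuotientGroup.mk' H) '' X) ≤ palWidth G X ∧
    palWidth G X ≤ palWidth (G ⧸ H) ((QuotientGroup.mk' H) '' X) + palWidthOn H X := by
  refine ⟨palWidth_map_le (QuotientGroup.mk'_surjective H), ?_⟩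
  simpa only [QuotientGroup.ker_mk'] using
    palWidth_le_palWidth_map_add (X := X) (QuotientGroup.mk' H)

theorem palWidth_quotient_bounds {G : Type*} [Group G] (X : Set G)
    (hX : Subgroup.closure X = ⊤) (H : Subgroup G) [H.Normal] :
    palWidth (G ⧸ H) ((QuotientGroup.mk' H) '' X) ≤ palWidth G X ∧
    palWidth G X ≤ palWidth (G ⧸ H) ((QuotientGroup.mk' H) '' X) + palWidthOn H X :=
  palWidth_quotient_bounds_general X H
end

section
/- Let G = ⟨A, x_1, ..., x_n⟩ be a group where A is an abelian normal subgroup of G. Then [A, G] = { [a_1, x_1][a_2, x_2]⋯[a_n, x_n] : a_i ∈ A }, i.e., every element of the subgroup [A, G] is a product of exactly n such commutators. -/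
/-!
Since `A` is abelian and normal, `a ↦ ⁅a, g⁆` is an endomorphism of `A` for each `g`, so the
products `⁅a 0, x 0⁆ ⋯ ⁅a (n-1), x (n-1)⁆` form the image `S` of a homomorphism `Aⁿ → A`,
in particular a subgroup of `A`. The `g` with `⁅A, g⁆ ⊆ S` form a subgroup of `G`; it contains
`A` (whose commutators are trivial) and every `x i` (take `a` supported at `i`), hence is all
of `G`, so `⁅A, G⁆ ⊆ S`.
-/

open scoped commutatorElement

namespace Subgroup

variable {G : Type*} [Group G] (A : Subgroup G) [A.Normal]

theorem commutatorElement_mem_of_mem_left {a : G} (ha : a ∈ A) (g : G) : ⁅a, g⁆ ∈ A :=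
  commutator_le_left A ⊤ (commutator_mem_commutator ha (mem_top g))

theorem commutatorElement_mem_of_mem_closure {S : Subgroup G} (hSA : S ≤ A) {X : Set G}
    (hX : ∀ x ∈ X, ∀ a ∈ A, ⁅a, x⁆ ∈ S) {g : G} (hg : g ∈ closure X) :
    ∀ a ∈ A, ⁅a, g⁆ ∈ S := by
  induction hg using closure_induction with
  | mem x hx => exact hX x hx
  | one => intro a _; rw [commutatorElement_one_right]; exact one_mem S
  | mul g h _ _ hg hh =>
    intro a ha
    have hah : ⁅a, h⁆ ∈ S := hh a ha
    -- conjugating `c := ⁅a, h⁆` by `g` multiplies it by `⁅c⁻¹, g⁆`, with `c⁻¹ ∈ A`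
    have hsplit : ⁅a, g * h⁆ = ⁅a, g⁆ * (⁅a, h⁆ * ⁅⁅a, h⁆⁻¹, g⁆) := by group
    rw [hsplit]
    exact mul_mem (hg a ha) (mul_mem hah (hg _ (inv_mem (hSA hah))))
  | inv g _ hg =>
    intro a ha
    have hinv : ⁅a, g⁻¹⁆ = ⁅g⁻¹ * a * g, g⁆⁻¹ := by group
    rw [hinv]
    exact inv_mem (hg _ (Normal.conj_mem' ‹_› a ha g))

variable [IsMulCommutative A]

def commutatorRightHom (g : G) : A →* A where
  toFun a := ⟨⁅(a : G), g⁆, commutatorElement_mem_of_mem_left A a.2 g⟩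
  map_one' := Subtype.ext (commutatorElement_one_left g)
  map_mul' a b := Subtype.ext <| by
    change ⁅(a : G) * b, g⁆ = ⁅(a : G), g⁆ * ⁅(b : G), g⁆
    have hb : ⁅(b : G), g⁆ ∈ A := commutatorElement_mem_of_mem_left A b.2 g
    have hsplit : ⁅(a : G) * b, g⁆ = a * ⁅(b : G), g⁆ * (a : G)⁻¹ * ⁅(a : G), g⁆ := by group
    rw [hsplit, setLike_mul_comm a.2 hb, mul_inv_cancel_right,
      setLike_mul_comm hb (commutatorElement_mem_of_mem_left A a.2 g)]

open IsMulCommutative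

def commutatorProdHom {ι : Type*} [Fintype ι] (x : ι → G) : (ι → A) →* A :=
  ∏ i, (commutatorRightHom A (x i)).comp (Pi.evalMonoidHom (fun _ => A) i)

theorem commutatorProdHom_apply {ι : Type*} [Fintype ι] (x : ι → G) (a : ι → A) :
    commutatorProdHom A x a = ∏ i, commutatorRightHom A (x i) (a i) := by
  simp [commutatorProdHom]

theorem commutatorProdHom_mulSingle {ι : Type*} [Fintype ι] [DecidableEq ι] (x : ι → G)
    (i : ι) (a : A) : commutatorProdHom A x (Pi.mulSingle i a) = commutatorRightHom A (x i) a := by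
  rw [commutatorProdHom_apply, Fintype.prod_eq_single i fun j hj => by simp [hj],
    Pi.mulSingle_eq_same]

theorem coe_commutatorProdHom_apply {n : ℕ} (x : Fin n → G) (a : Fin n → A) :
    (commutatorProdHom A x a : G) = (List.ofFn fun i => ⁅(a i : G), x i⁆).prod := by
  rw [commutatorProdHom_apply, ← List.prod_ofFn, SubmonoidClass.coe_list_prod, List.map_ofFn]
  rfl

theorem commutator_top_eq_map_range_commutatorProdHom {ι : Type*} [Fintype ι] (x : ι → G)
    (hgen : closure ((A : Set G) ∪ Set.range x) = ⊤) :
    ⁅A, ⊤⁆ = (commutatorProdHom A x).range.map A.subtype := by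
  classical
  apply le_antisymm
  · rw [commutator_le]
    intro a ha g _
    refine commutatorElement_mem_of_mem_closure A (map_subtype_le _) ?_ (hgen ▸ mem_top g) a ha
    rintro y (hy | ⟨i, rfl⟩) b hb
    · rw [(commutatorElement_eq_one_iff_mul_comm).2 (setLike_mul_comm hb hy)]
      exact one_mem _
    · exact ⟨_, ⟨Pi.mulSingle i ⟨b, hb⟩, rfl⟩, by rw [commutatorProdHom_mulSingle]; rfl⟩
  · rintro _ ⟨_, ⟨a, rfl⟩, rfl⟩
    rw [commutatorProdHom_apply, coe_subtype, ← mem_subgroupOf]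
    exact prod_mem fun i _ => mem_subgroupOf.2 (commutator_mem_commutator (a i).2 (mem_top _))

theorem mem_map_range_commutatorProdHom_iff {n : ℕ} (x : Fin n → G) {g : G} :
    g ∈ (commutatorProdHom A x).range.map A.subtype ↔
      ∃ a : Fin n → G, (∀ i, a i ∈ A) ∧ g = (List.ofFn fun i => ⁅a i, x i⁆).prod := by
  constructor
  · rintro ⟨_, ⟨a, rfl⟩, rfl⟩
    exact ⟨fun i => a i, fun i => (a i).2, coe_commutatorProdHom_apply A x a⟩
  · rintro ⟨a, ha, rfl⟩
    exact ⟨_, ⟨fun i => ⟨a i, ha i⟩, rfl⟩, coe_commutatorProdHom_apply A x _⟩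

end Subgroup

/-- Rhemtulla's lemma: if `A` is an abelian normal subgroup of `G` and
`G = ⟨A, x 0, ..., x (n-1)⟩`, then `[A, G]` is exactly the set of products
`[a 0, x 0][a 1, x 1]⋯[a (n-1), x (n-1)]` with `a i ∈ A`. -/
theorem commutator_subgroup_eq_prod_commutators {G : Type*} [Group G]
    (A : Subgroup G) [A.Normal] (hA : ∀ a ∈ A, ∀ b ∈ A, a * b = b * a)
    (n : ℕ) (x : Fin n → G)
    (hgen : Subgroup.closure ((A : Set G) ∪ Set.range x) = ⊤) :
    ∀ g : G, g ∈ ⁅A, (⊤ : Subgroup G)⁆ ↔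
      ∃ a : Fin n → G, (∀ i, a i ∈ A) ∧
        g = (List.ofFn fun i => ⁅a i, x i⁆).prod := by
  have : IsMulCommutative A := .of_comm fun a b => Subtype.ext (hA a a.2 b b.2)
  intro g
  rw [Subgroup.commutator_top_eq_map_range_commutatorProdHom A x hgen,
    Subgroup.mem_map_range_commutatorProdHom_iff]
end

section
/- In G = Z ≀ Z, every element of the commutator subgroup G' is a single commutator; more precisely, for every c ∈ C with Σ_i n_i = 0 there exists f ∈ C such that [f, b] = c, where b generates the acting copy of Z. -/
lemma emd_one (x : ℤ →₀ ℤ) : Finsupp.equivMapDomain (1 : Equiv.Perm ℤ) x = x := by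
  ext i; simp [Finsupp.equivMapDomain_apply]; rfl

lemma emd_mul (e f : Equiv.Perm ℤ) (x : ℤ →₀ ℤ) :
    Finsupp.equivMapDomain (e * f) x = Finsupp.equivMapDomain e (Finsupp.equivMapDomain f x) := by
  ext i; simp [Finsupp.equivMapDomain_apply]; rfl

/-- The shift automorphism of the base group of `ℤ ≀ ℤ`. -/
noncomputable def shiftAut (k : ℤ) : Multiplicative (ℤ →₀ ℤ) ≃* Multiplicative (ℤ →₀ ℤ) :=
  AddEquiv.toMultiplicative (Finsupp.domCongr (Equiv.addRight k))

/-- The action of the top group `ℤ` on the base group `⨁_{i ∈ ℤ} ℤ` by shifting indices. -/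
noncomputable def wrφ : Multiplicative ℤ →* MulAut (Multiplicative (ℤ →₀ ℤ)) where
  toFun k := shiftAut k.toAdd
  map_one' := by
    ext f
    simp [shiftAut, Finsupp.domCongr_apply, emd_one]
  map_mul' k l := by
    ext f
    simp [shiftAut, Finsupp.domCongr_apply, MulAut.mul_apply, emd_mul]
    ring_nf

/-- The restricted wreath product `ℤ ≀ ℤ`, realized as the semidirect product
of the base group `⨁_{i ∈ ℤ} ℤ` by `ℤ` acting by shifts. -/
noncomputable abbrev ZwrZ : Type :=
  SemidirectProduct (Multiplicative (ℤ →₀ ℤ)) (Multiplicative ℤ) wrφ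

/-- The standard generator `a` of `ℤ ≀ ℤ` (generator of the 0-th base copy of `ℤ`). -/
noncomputable def aGen : ZwrZ := SemidirectProduct.inl (Multiplicative.ofAdd (Finsupp.single 0 1))

/-- The standard generator `b` of `ℤ ≀ ℤ` (generator of the acting copy of `ℤ`). -/
noncomputable def bGen : ZwrZ := SemidirectProduct.inr (Multiplicative.ofAdd 1)

/-- The embedding of a base-group element `c = (n_i)_{i ∈ ℤ}` into `ℤ ≀ ℤ`. -/
noncomputable def base (c : ℤ →₀ ℤ) : ZwrZ := SemidirectProduct.inl (Multiplicative.ofAdd c)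

/-! Since `b` acts by the shift, `[f, b]` is the base element `i ↦ f i - f (i - 1)`. So `c` is
the commutator `[f, b]` as soon as `f` is a discrete antiderivative of `c`; the partial sums
`f i = ∑_{j ≤ i} c j` are one, and they vanish for `i` beyond the support of `c` precisely
because `∑ c = 0`. -/

section PartialSums

variable {M : Type*} [AddCommGroup M]

lemma ite_le_sub_ite_le_sub_one (i j : ℤ) (n : M) :
    ((if j ≤ i then n else 0) - if j ≤ i - 1 then n else 0) = if j = i then n else 0 := by
  split_ifs <;> first | omega | simp

lemma exists_finsupp_eq_partialSum (c : ℤ →₀ M) (hc : (c.sum fun _ n => n) = 0) :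
    ∃ f : ℤ →₀ M, ∀ i, f i = c.sum fun j n => if j ≤ i then n else 0 := by
  obtain ⟨lo, hlo⟩ := c.support.bddBelow
  obtain ⟨hi, hhi⟩ := c.support.bddAbove
  refine ⟨Finsupp.onFinset (Finset.Icc lo hi) (fun i => c.sum fun j n => if j ≤ i then n else 0)
    fun i hne => Finset.mem_Icc.2 ⟨?_, ?_⟩, fun _ => rfl⟩
  · by_contra hlt
    exact hne (Finset.sum_eq_zero fun j hj => if_neg (by have := hlo hj; omega))
  · by_contra hgt
    have htotal : (c.sum fun j n => if j ≤ i then n else 0) = c.sum fun _ n => n :=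
      Finsupp.sum_congr fun j hj => if_pos (by have := hhi hj; omega)
    exact hne (htotal.trans hc)

lemma exists_sub_eq_of_sum_eq_zero (c : ℤ →₀ M) (hc : (c.sum fun _ n => n) = 0) :
    ∃ f : ℤ →₀ M, ∀ i, f i - f (i - 1) = c i := by
  obtain ⟨f, hf⟩ := exists_finsupp_eq_partialSum c hc
  refine ⟨f, fun i => ?_⟩
  rw [hf, hf, ← Finsupp.sum_sub]
  simp only [ite_le_sub_ite_le_sub_one]
  exact c.sum_ite_self_eq' i

end PartialSums

open scoped commutatorElement

theorem SemidirectProduct.commutatorElement_inl_inr {N G : Type*} [Group N] [Group G]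
    {φ : G →* MulAut N} (n : N) (g : G) :
    ⁅(inl n : N ⋊[φ] G), (inr g : N ⋊[φ] G)⁆ = inl (n * φ g n⁻¹) := by
  rw [commutatorElement_def, map_mul, inl_aut, map_inv, map_inv]
  group

lemma commutatorElement_base_bGen (f : ℤ →₀ ℤ) :
    ⁅base f, bGen⁆ = base (f - Finsupp.equivMapDomain (Equiv.addRight 1) f) := by
  rw [base, bGen, SemidirectProduct.commutatorElement_inl_inr, base]
  congr 1
  ext i
  simp [wrφ, shiftAut, sub_eq_add_neg]

/-- Every element of the commutator subgroup of `ℤ ≀ ℤ` is a single commutator `[f, b]`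
with `f` in the base group. -/
theorem commutator_ZwrZ_is_commutator :
    ∀ c : ℤ →₀ ℤ, (c.sum fun _ n => n) = 0 → ∃ f : ℤ →₀ ℤ, ⁅base f, bGen⁆ = base c := by
  intro c hc
  obtain ⟨f, hf⟩ := exists_sub_eq_of_sum_eq_zero c hc
  refine ⟨f, ?_⟩
  rw [commutatorElement_base_bGen]
  congr 1
  ext i
  simpa [sub_eq_add_neg] using hf i
end

section
/- The palindromic width of the metabelian Baumslag–Solitar group BS(1,n) = ⟨a, t | t^{-1}at = a^n⟩ with respect to the generating set {a, t} is at most 2: every element is a product of two palindromes. -/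
/-- The relator `t⁻¹ a t a⁻ⁿ` of the Baumslag–Solitar group `BS(1,n)`. -/
def BSrels (n : ℤ) : Set (FreeGroup (Fin 2)) :=
  {(FreeGroup.of 1)⁻¹ * FreeGroup.of 0 * FreeGroup.of 1 * (FreeGroup.of 0 ^ n)⁻¹}

/-- The Baumslag–Solitar group `BS(1,n) = ⟨a, t | t⁻¹ a t = aⁿ⟩`. -/
def BS (n : ℤ) : Type := PresentedGroup (BSrels n)

instance (n : ℤ) : Group (BS n) := by unfold BS; infer_instance

/-- The generator `a` of `BS(1,n)`. -/
def BSa (n : ℤ) : BS n := PresentedGroup.of 0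

/-- The generator `t` of `BS(1,n)`. -/
def BSt (n : ℤ) : BS n := PresentedGroup.of 1

/-!
Pushing `t⁻¹` to the right past powers of `a` (via `t⁻¹ a t = aⁿ`) brings every element of
`BS(1,n)` to the form `tᵏ aˡ t⁻ᵐ` with `k, m ≥ 0`, and
`tᵏ aˡ t⁻ᵐ = (tᵏ aˡ tᵏ) · t^{-(k+m)}` is a product of two palindromes.
-/

namespace IsPalindrome

variable {G : Type*} [Group G] {X : Set G}

theorem pow {x : G} (hx : x ∈ X ∨ x⁻¹ ∈ X) (k : ℕ) : IsPalindrome X (x ^ k) :=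
  ⟨List.replicate k x, fun _ hy => List.eq_of_mem_replicate hy ▸ hx,
    List.reverse_replicate, List.prod_replicate k x⟩

theorem zpow {x : G} (hx : x ∈ X) : ∀ l : ℤ, IsPalindrome X (x ^ l)
  | .ofNat k => by simpa using pow (.inl hx) k
  | .negSucc k => by
    rw [zpow_negSucc, ← inv_pow]
    exact pow (.inr ((inv_inv x).symm ▸ hx)) (k + 1)

theorem sandwich {p q : G} (hq : IsPalindrome X q) (hp : IsPalindrome X p) :
    IsPalindrome X (q * p * q) := by
  obtain ⟨u, huX, hu, rfl⟩ := hq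
  obtain ⟨v, hvX, hv, rfl⟩ := hp
  refine ⟨u ++ v ++ u, ?_, by simp [hu, hv], by simp [mul_assoc]⟩
  simp only [List.mem_append]
  rintro x ((hx | hx) | hx)
  exacts [huX x hx, hvX x hx, huX x hx]

end IsPalindrome

section BS

variable {n : ℤ}

variable (n) in
theorem BSt_inv_mul_BSa_mul_BSt : (BSt n)⁻¹ * BSa n * BSt n = BSa n ^ n := by
  have h : PresentedGroup.mk (BSrels n)
      ((FreeGroup.of 1)⁻¹ * FreeGroup.of 0 * FreeGroup.of 1 * (FreeGroup.of 0 ^ n)⁻¹) = 1 :=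
    PresentedGroup.one_of_mem rfl
  rw [map_mul, map_mul, map_mul, map_inv, map_inv, map_zpow] at h
  exact mul_inv_eq_one.mp h

theorem BSt_inv_mul_BSa_zpow_mul_BSt (l : ℤ) :
    (BSt n)⁻¹ * BSa n ^ l * BSt n = BSa n ^ (l * n) := by
  have h := conj_zpow (a := (BSt n)⁻¹) (b := BSa n) (i := l)
  rw [inv_inv] at h
  rw [← h, BSt_inv_mul_BSa_mul_BSt, ← zpow_mul, mul_comm]

theorem BSt_pow_inv_mul_BSa_zpow_mul_BSt_pow (m : ℕ) (l : ℤ) :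
    (BSt n ^ m)⁻¹ * BSa n ^ l * BSt n ^ m = BSa n ^ (l * n ^ m) := by
  induction m generalizing l with
  | zero => simp
  | succ m ih =>
    calc (BSt n ^ (m + 1))⁻¹ * BSa n ^ l * BSt n ^ (m + 1)
        = (BSt n)⁻¹ * ((BSt n ^ m)⁻¹ * BSa n ^ l * BSt n ^ m) * BSt n := by
          rw [pow_succ]; group
      _ = BSa n ^ (l * n ^ (m + 1)) := by
          rw [ih, BSt_inv_mul_BSa_zpow_mul_BSt, pow_succ, mul_assoc]

theorem BSt_pow_inv_mul_BSa_zpow (m : ℕ) (l : ℤ) :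
    (BSt n ^ m)⁻¹ * BSa n ^ l = BSa n ^ (l * n ^ m) * (BSt n ^ m)⁻¹ := by
  rw [← BSt_pow_inv_mul_BSa_zpow_mul_BSt_pow]; group

theorem BSa_zpow_mul_BSt (l : ℤ) : BSa n ^ l * BSt n = BSt n * BSa n ^ (l * n) := by
  rw [← BSt_inv_mul_BSa_zpow_mul_BSt]; group

variable (n) in
theorem closure_BSa_BSt : Subgroup.closure ({BSa n, BSt n} : Set (BS n)) = ⊤ := by
  have hgen : Set.range (PresentedGroup.of : Fin 2 → BS n) = {BSa n, BSt n} := by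
    ext x; simp [Fin.exists_fin_two, BSa, BSt, eq_comm]; exact Iff.rfl
  have h := PresentedGroup.closure_range_of (BSrels n)
  rwa [hgen] at h

theorem exists_BS_normal_form (g : BS n) :
    ∃ (k m : ℕ) (l : ℤ), g = BSt n ^ k * BSa n ^ l * (BSt n ^ m)⁻¹ := by
  have hg : g ∈ Subgroup.closure {BSa n, BSt n} := closure_BSa_BSt n ▸ Subgroup.mem_top g
  have mul_BSa_zpow (k m : ℕ) (l j : ℤ) : BSt n ^ k * BSa n ^ l * (BSt n ^ m)⁻¹ * BSa n ^ j =
      BSt n ^ k * BSa n ^ (l + j * n ^ m) * (BSt n ^ m)⁻¹ := by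
    rw [mul_assoc _ (BSt n ^ m)⁻¹, BSt_pow_inv_mul_BSa_zpow, zpow_add]; group
  induction hg using Subgroup.closure_induction_right with
  | one => exact ⟨0, 0, 0, by simp⟩
  | mul_right _ _ _ hy ih =>
    obtain ⟨k, m, l, rfl⟩ := ih
    rcases hy with rfl | rfl
    · exact ⟨k, m, l + n ^ m, by simpa using mul_BSa_zpow k m l 1⟩
    · cases m with
      | zero =>
        refine ⟨k + 1, 0, l * n, ?_⟩
        simp only [pow_zero, inv_one, mul_one, pow_succ, mul_assoc]
        exact congrArg (BSt n ^ k * ·) (BSa_zpow_mul_BSt l)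
      | succ m => exact ⟨k, m, l, by rw [pow_succ]; group⟩
  | mul_inv_cancel _ _ _ hy ih =>
    obtain ⟨k, m, l, rfl⟩ := ih
    rcases hy with rfl | rfl
    · exact ⟨k, m, l - n ^ m, by simpa [← sub_eq_add_neg] using mul_BSa_zpow k m l (-1)⟩
    · exact ⟨k, m + 1, l, by rw [pow_succ]; group⟩

end BS

theorem BS_pw_le_two_general (n : ℤ) (g : BS n) :
    ∃ p q : BS n, IsPalindrome {BSa n, BSt n} p ∧ IsPalindrome {BSa n, BSt n} q ∧
      g = p * q := by
  obtain ⟨k, m, l, rfl⟩ := exists_BS_normal_form g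
  have ha : BSa n ∈ ({BSa n, BSt n} : Set (BS n)) := .inl rfl
  have ht : BSt n ∈ ({BSa n, BSt n} : Set (BS n)) := .inr rfl
  refine ⟨BSt n ^ k * BSa n ^ l * BSt n ^ k, BSt n ^ (-(k + m : ℤ)),
    (IsPalindrome.pow (.inl ht) k).sandwich (IsPalindrome.zpow ha l), IsPalindrome.zpow ht _, ?_⟩
  group

/-- Every element of `BS(1,n)` is a product of two palindromes in the generators
`a`, `t`. -/
theorem BS_pw_le_two (n : ℤ) (hn : n ≠ 0) (g : BS n) :
    ∃ p q : BS n, IsPalindrome {BSa n, BSt n} p ∧ IsPalindrome {BSa n, BSt n} q ∧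
      g = p * q :=
  BS_pw_le_two_general n g
end
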